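/- arXiv:2005.01071 — 4 statements merged into one kernel-verified Lean document; each statement's English description precedes it below -/
import Mathlib

section
/- For all integers a and b, ¬(a ∣ b) if and only if (a = 0 and b ≠ 0) or there exist integers x' and x'' such that either (b = x' + x'' and a ∣ x' and 0 < x'' < a) or (b = -x' - x'' and a ∣ x' and 0 < x'' < -a). -/
theorem lechner_trick (a b : ℤ) :
    ¬ (a ∣ b) ↔
      (a = 0 ∧ b ≠ 0) ∨
        ∃ x' x'' : ℤ,
          (b = x' + x'' ∧ a ∣ x' ∧ 0 < x'' ∧ x'' < a) ∨
          (b = -x' - x'' ∧ a ∣ x' ∧ 0 < x'' ∧ x'' < -a) := by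
  constructor
  · intro h
    rcases lt_trichotomy a 0 with ha | ha | ha
    · right
      refine ⟨(-a) * ((-b) / (-a)), (-b) % (-a), Or.inr ⟨?_, ⟨-((-b)/(-a)), by ring⟩, ?_, ?_⟩⟩
      · have := Int.emod_add_mul_ediv (-b) (-a); linarith
      · rcases (Int.emod_pos_of_not_dvd (fun hd => h (by
          rcases hd with ⟨c, hc⟩; exact ⟨c, by linarith⟩)) : -a = 0 ∨ 0 < (-b) % (-a)) with h0 | h0
        · omega
        · exact h0
      · exact Int.emod_lt_of_pos _ (by omega)
    · exact Or.inl ⟨ha, fun hb => h (by simp [ha, hb])⟩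
    · right
      refine ⟨a * (b / a), b % a, Or.inl ⟨?_, ⟨b / a, rfl⟩, ?_, ?_⟩⟩
      · have := Int.emod_add_mul_ediv b a; linarith
      · rcases (Int.emod_pos_of_not_dvd h : a = 0 ∨ 0 < b % a) with h0 | h0
        · omega
        · exact h0
      · exact Int.emod_lt_of_pos _ ha
  · rintro (⟨ha, hb⟩ | ⟨x', x'', ⟨rfl, hd, h1, h2⟩ | ⟨rfl, hd, h1, h2⟩⟩) hab
    · exact hb (by simpa [ha] using hab)
    · have : a ∣ x'' := (dvd_add_right hd).mp hab
      have := Int.le_of_dvd h1 this; omega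
    · have : a ∣ x'' := by
        have h3 : a ∣ -x' - x'' + x' := dvd_add hab hd
        have h4 : -x' - x'' + x' = -x'' := by ring
        rw [h4] at h3
        exact (dvd_neg.mp h3)
      have h5 : -a ∣ x'' := this.neg_left
      have := Int.le_of_dvd h1 h5; omega
end

section
/- For any positive integers m₁, …, mₙ and integers a₁, …, aₙ, r₁, …, rₙ: there exists an integer x such that mᵢ ∣ (aᵢ·x − rᵢ) for all i, if and only if (for all pairs i, j: gcd(aᵢ·mⱼ, aⱼ·mᵢ) ∣ (aᵢ·rⱼ − aⱼ·rᵢ)) and (for all i: gcd(aᵢ, mᵢ) ∣ rᵢ). -/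
/-!
Cancelling `dᵢ = gcd(aᵢ, mᵢ)` turns the `i`-th congruence into `aᵢ' x ≡ rᵢ' (mod mᵢ')` with
`aᵢ'` invertible modulo `mᵢ'`, i.e. into `x ≡ cᵢ (mod mᵢ')`. After cancelling `dᵢ dⱼ`, the cross
condition says that `aᵢ' aⱼ' cᵢ ≡ aᵢ' aⱼ' cⱼ` modulo `g = gcd(mᵢ', mⱼ')`, and `aᵢ' aⱼ'` is a unit
modulo `g`, so `g ∣ cᵢ - cⱼ`. The Chinese remainder theorem for non-coprime moduli then glues the
residues; its inductive step rests on `gcd(M, lcm Mᵢ) = lcm gcd(M, Mᵢ)`, checked prime by prime.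
-/

theorem Int.gcd_dvd_of_dvd_mul_sub {a m r x : ℤ} (h : m ∣ a * x - r) :
    (Int.gcd a m : ℤ) ∣ r := by
  rw [show r = a * x - (a * x - r) by ring]
  exact dvd_sub ((Int.gcd_dvd_left _ _).mul_right x) ((Int.gcd_dvd_right _ _).trans h)

theorem Int.gcd_mul_dvd_mul_sub_mul_of_dvd_mul_sub {a b m n r s x : ℤ} (hr : m ∣ a * x - r)
    (hs : n ∣ b * x - s) : (Int.gcd (a * n) (b * m) : ℤ) ∣ a * s - b * r := by
  rw [show a * s - b * r = b * (a * x - r) - a * (b * x - s) by ring]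
  exact dvd_sub ((Int.gcd_dvd_right _ _).trans (mul_dvd_mul_left b hr))
    ((Int.gcd_dvd_left _ _).trans (mul_dvd_mul_left a hs))

theorem Nat.gcd_lcm_distrib (a b c : ℕ) : gcd a (lcm b c) = lcm (gcd a b) (gcd a c) := by
  rcases eq_or_ne a 0 with rfl | ha
  · simp
  rcases eq_or_ne b 0 with rfl | hb
  · simpa using (Nat.lcm_eq_left_iff_dvd.mpr (Nat.gcd_dvd_left a c)).symm
  rcases eq_or_ne c 0 with rfl | hc
  · simpa using (Nat.lcm_eq_right_iff_dvd.mpr (Nat.gcd_dvd_left a b)).symm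
  have hg : ∀ {n}, gcd a n ≠ 0 := Nat.gcd_ne_zero_left ha
  refine Nat.eq_of_factorization_eq hg (Nat.lcm_ne_zero hg hg) fun p => ?_
  simp only [Nat.factorization_gcd ha (Nat.lcm_ne_zero hb hc), Nat.factorization_lcm hb hc,
    Nat.factorization_lcm hg hg, Nat.factorization_gcd ha hb, Nat.factorization_gcd ha hc,
    Finsupp.inf_apply, Finsupp.sup_apply]
  exact min_max_distrib_left _ _ _

theorem Int.gcd_lcm_distrib (a b c : ℤ) :
    GCDMonoid.gcd a (GCDMonoid.lcm b c) =
      GCDMonoid.lcm (GCDMonoid.gcd a b) (GCDMonoid.gcd a c) := by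
  simp only [← Int.coe_gcd, ← Int.coe_lcm, Int.gcd, Int.lcm, Int.natAbs_natCast]
  exact congrArg _ (Nat.gcd_lcm_distrib _ _ _)

theorem Int.gcd_finset_lcm {ι : Type*} [DecidableEq ι] (a : ℤ) (s : Finset ι) (f : ι → ℤ) :
    GCDMonoid.gcd a (s.lcm f) = s.lcm fun i => GCDMonoid.gcd a (f i) := by
  induction s using Finset.induction_on with
  | empty => simp
  | insert i s _ ih => rw [Finset.lcm_insert, Finset.lcm_insert, Int.gcd_lcm_distrib, ih]

theorem Int.exists_forall_dvd_sub_of_pairwise_gcd_dvd {ι : Type*} [DecidableEq ι]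
    (s : Finset ι) (c M : ι → ℤ)
    (h : ∀ i ∈ s, ∀ j ∈ s, (Int.gcd (M i) (M j) : ℤ) ∣ c i - c j) :
    ∃ x, ∀ i ∈ s, M i ∣ x - c i := by
  induction s using Finset.induction_on with
  | empty => exact ⟨0, by simp⟩
  | insert k s _ ih =>
    obtain ⟨y, hy⟩ := ih fun i hi j hj => h i (by simp [hi]) j (by simp [hj])
    have hgcd : GCDMonoid.gcd (M k) (s.lcm M) ∣ c k - y := by
      rw [Int.gcd_finset_lcm]
      refine Finset.lcm_dvd fun i hi => ?_
      rw [← Int.coe_gcd, show c k - y = (c k - c i) - (y - c i) by ring]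
      exact dvd_sub (h k (by simp) i (by simp [hi])) ((Int.gcd_dvd_right _ _).trans (hy i hi))
    obtain ⟨u, v, huv⟩ := (gcd_dvd_iff_exists _ _).mp hgcd
    refine ⟨y + s.lcm M * v,
      (Finset.forall_mem_insert _ _ _).mpr ⟨⟨-u, by linear_combination -huv⟩, fun i hi => ?_⟩⟩
    rw [show y + s.lcm M * v - c i = (y - c i) + s.lcm M * v by ring]
    exact dvd_add (hy i hi) ((Finset.dvd_lcm hi).mul_right v)

theorem Int.exists_coprime_of_gcd_dvd {a m r : ℤ} (hm : m ≠ 0) (h : (Int.gcd a m : ℤ) ∣ r) :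
    ∃ d a' m' r' : ℤ, d ≠ 0 ∧ IsCoprime a' m' ∧ a = d * a' ∧ m = d * m' ∧ r = d * r' := by
  obtain ⟨a', m', hcop, ha, hm'⟩ := Int.exists_gcd_one (Int.gcd_pos_of_ne_zero_right a hm)
  obtain ⟨r', rfl⟩ := h
  exact ⟨Int.gcd a m, a', m', r', Int.natCast_ne_zero.mpr (Int.gcd_ne_zero_right hm),
    Int.isCoprime_iff_gcd_eq_one.mpr hcop, ha.trans (mul_comm _ _), hm'.trans (mul_comm _ _), rfl⟩

theorem IsCoprime.exists_dvd_mul_sub {R : Type*} [CommRing R] {a m : R} (h : IsCoprime a m)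
    (r : R) : ∃ c, m ∣ a * c - r := by
  obtain ⟨u, v, huv⟩ := h
  exact ⟨u * r, -(v * r), by linear_combination r * huv⟩

theorem dvd_mul_sub_of_dvd_sub {R : Type*} [CommRing R] {a m r c x : R} (hc : m ∣ a * c - r)
    (hx : m ∣ x - c) : m ∣ a * x - r := by
  rw [show a * x - r = a * (x - c) + (a * c - r) by ring]
  exact dvd_add (hx.mul_left a) hc

theorem Int.gcd_dvd_of_gcd_mul_mul_dvd_mul {k x y z : ℤ} (hk : k ≠ 0)
    (h : (Int.gcd (k * x) (k * y) : ℤ) ∣ k * z) : (Int.gcd x y : ℤ) ∣ z := by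
  rw [Int.gcd_mul_left, Nat.cast_mul, Int.natCast_natAbs] at h
  exact (mul_dvd_mul_iff_left hk).mp ((mul_dvd_mul_right (self_dvd_abs k) _).trans h)

theorem Int.gcd_dvd_sub_of_isCoprime {d e a b m n r s c c' : ℤ} (hd : d ≠ 0) (he : e ≠ 0)
    (ha : IsCoprime a m) (hb : IsCoprime b n) (hc : m ∣ a * c - r) (hc' : n ∣ b * c' - s)
    (h : (Int.gcd (d * a * (e * n)) (e * b * (d * m)) : ℤ) ∣ d * a * (e * s) - e * b * (d * r)) :
    (Int.gcd m n : ℤ) ∣ c - c' := by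
  have hcross : (Int.gcd (a * n) (b * m) : ℤ) ∣ a * s - b * r := by
    refine Int.gcd_dvd_of_gcd_mul_mul_dvd_mul (mul_ne_zero hd he) ?_
    convert h using 3 <;> ring
  have hgm : (Int.gcd m n : ℤ) ∣ m := Int.gcd_dvd_left _ _
  have hgn : (Int.gcd m n : ℤ) ∣ n := Int.gcd_dvd_right _ _
  have hab : (Int.gcd m n : ℤ) ∣ a * b * (c - c') := by
    rw [show a * b * (c - c') = b * (a * c - r) - a * (b * c' - s) - (a * s - b * r) by ring]
    refine dvd_sub (dvd_sub ((hgm.trans hc).mul_left b) ((hgn.trans hc').mul_left a)) ?_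
    exact (Int.dvd_coe_gcd (hgn.trans (dvd_mul_left n a)) (hgm.trans (dvd_mul_left m b))).trans
      hcross
  have hcop : IsCoprime (a * b) (Int.gcd m n : ℤ) :=
    (ha.of_isCoprime_of_dvd_right hgm).mul_left (hb.of_isCoprime_of_dvd_right hgn)
  exact hcop.symm.dvd_of_dvd_mul_left hab

theorem generalized_CRT (n : ℕ) (m a r : Fin n → ℤ) (hm : ∀ i, 0 < m i) :
    (∃ x : ℤ, ∀ i, m i ∣ (a i * x - r i)) ↔
      (∀ i j, (Int.gcd (a i * m j) (a j * m i) : ℤ) ∣ (a i * r j - a j * r i)) ∧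
      (∀ i, (Int.gcd (a i) (m i) : ℤ) ∣ r i) := by
  refine ⟨fun ⟨x, hx⟩ => ⟨fun i j => Int.gcd_mul_dvd_mul_sub_mul_of_dvd_mul_sub (hx i) (hx j),
    fun i => Int.gcd_dvd_of_dvd_mul_sub (hx i)⟩, fun ⟨hcross, hsingle⟩ => ?_⟩
  choose d a' m' r' hd hcop ha hm' hr using
    fun i => Int.exists_coprime_of_gcd_dvd (hm i).ne' (hsingle i)
  choose c hc using fun i => (hcop i).exists_dvd_mul_sub (r' i)
  obtain ⟨x, hx⟩ := Int.exists_forall_dvd_sub_of_pairwise_gcd_dvd Finset.univ c m'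
    fun i _ j _ => Int.gcd_dvd_sub_of_isCoprime (hd i) (hd j) (hcop i) (hcop j) (hc i) (hc j)
      (by simpa only [ha, hm', hr] using hcross i j)
  refine ⟨x, fun i => ?_⟩
  rw [ha i, hm' i, hr i, mul_assoc, ← mul_sub]
  exact mul_dvd_mul_left _ (dvd_mul_sub_of_dvd_sub (hc i) (hx i (Finset.mem_univ i)))
end

section
/- Under the hypotheses of the generalized Chinese remainder theorem (positive integers m₁,…,mₙ and integers a₁,…,aₙ,r₁,…,rₙ satisfying the compatibility conditions), if x₀ is a solution of the system mᵢ ∣ (aᵢ·x − rᵢ) for all i, then x is also a solution if and only if lcm(m'₁, …, m'ₙ) ∣ (x − x₀), where m'ᵢ = mᵢ / gcd(aᵢ, mᵢ). -/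
/-!
Since `x₀` is a solution, `x` solves the `i`-th congruence iff `mᵢ ∣ aᵢ (x - x₀)`. Cancelling
`gᵢ = gcd(aᵢ, mᵢ)` leaves `m'ᵢ` coprime to `aᵢ / gᵢ`, so this says `m'ᵢ ∣ x - x₀`, and all of
these hold together iff their lcm divides `x - x₀`.
-/

theorem List.foldr_intLcm_eq_lcm (l : List ℤ) :
    l.foldr (fun u v => (Int.lcm u v : ℤ)) 1 = (l : Multiset ℤ).lcm := by
  induction l with
  | nil => rfl
  | cons u l ih => rw [List.foldr_cons, ih, Int.coe_lcm, ← Multiset.cons_coe, Multiset.lcm_cons]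

theorem Int.ediv_gcd_dvd_iff_dvd_mul {a m y : ℤ} (h : 0 < Int.gcd a m) :
    m / Int.gcd a m ∣ y ↔ m ∣ a * y := by
  obtain ⟨g, a', m', hg, hcop, rfl, rfl⟩ := Int.exists_gcd_one' h
  have hg0 : (g : ℤ) ≠ 0 := by exact_mod_cast hg.ne'
  have hgcd : ((a' * g).gcd (m' * g) : ℤ) = g := by
    rw [Int.gcd_mul_right, hcop, one_mul, Int.natAbs_natCast]
  have hcop' : IsCoprime m' a' := Int.isCoprime_iff_gcd_eq_one.mpr (Int.gcd_comm _ _ ▸ hcop)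
  rw [hgcd, Int.mul_ediv_cancel _ hg0, mul_right_comm, mul_dvd_mul_iff_right hg0]
  exact ⟨fun hy => Dvd.dvd.mul_left hy a', hcop'.dvd_of_dvd_mul_left⟩

theorem dvd_mul_sub_iff_of_dvd_mul_sub {R : Type*} [CommRing R] {m a r x₀ x : R}
    (h : m ∣ a * x₀ - r) : m ∣ a * x - r ↔ m ∣ a * (x - x₀) := by
  rw [show a * x - r = a * (x - x₀) + (a * x₀ - r) by ring]
  exact dvd_add_left h

theorem generalized_CRT_uniqueness_general (n : ℕ) (m a r : Fin n → ℤ) (hm : ∀ i, 0 < m i)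
    (x₀ : ℤ) (hx₀ : ∀ i, m i ∣ (a i * x₀ - r i))
    (L : ℤ)
    (hL : L = (List.ofFn fun i => m i / (Int.gcd (a i) (m i) : ℤ)).foldr
      (fun u v => (Int.lcm u v : ℤ)) 1) :
    ∀ x : ℤ, (∀ i, m i ∣ (a i * x - r i)) ↔ L ∣ (x - x₀) := by
  intro x
  rw [hL, List.foldr_intLcm_eq_lcm, Multiset.lcm_dvd]
  simp only [Multiset.mem_coe, List.forall_mem_ofFn_iff]
  refine forall_congr' fun i => ?_
  rw [Int.ediv_gcd_dvd_iff_dvd_mul (Int.gcd_pos_of_ne_zero_right _ (hm i).ne'),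
    dvd_mul_sub_iff_of_dvd_mul_sub (hx₀ i)]

theorem generalized_CRT_uniqueness (n : ℕ) (m a r : Fin n → ℤ) (hm : ∀ i, 0 < m i)
    (hcompat₁ : ∀ i j, (Int.gcd (a i * m j) (a j * m i) : ℤ) ∣ (a i * r j - a j * r i))
    (hcompat₂ : ∀ i, (Int.gcd (a i) (m i) : ℤ) ∣ r i)
    (x₀ : ℤ) (hx₀ : ∀ i, m i ∣ (a i * x₀ - r i))
    (L : ℤ)
    (hL : L = (List.ofFn fun i => m i / (Int.gcd (a i) (m i) : ℤ)).foldr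
      (fun u v => (Int.lcm u v : ℤ)) 1) :
    ∀ x : ℤ, (∀ i, m i ∣ (a i * x - r i)) ↔ L ∣ (x - x₀) :=
  generalized_CRT_uniqueness_general n m a r hm x₀ hx₀ L hL
end

section
/- Every infinite path π in a finite directed graph contains a simple cycle as an infix; moreover, if every edge weight along some infinite suffix is drawn from a weighting w : E → ℤ and every cycle occurring in that suffix had strictly negative weight while the running sums c₀ + weight(π[0..j]) must remain ≥ 0 for all j, then a contradiction arises: some cycle in the suffix has nonnegative weight. -/
/-- Every infinite path in a finite directed graph contains a simple cycle as
an infix; moreover, if all running sums `c₀ + weight(π[0..j])` stay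
nonnegative, then some cycle infix of `π` has nonnegative total weight. -/
theorem infinite_path_cycles (V : Type*) [Fintype V]
    (E : Set (V × V)) (π : ℕ → V) (hpath : ∀ j : ℕ, (π j, π (j + 1)) ∈ E)
    (w : V × V → ℤ) (c₀ : ℕ) :
    (∃ r s : ℕ, r < s ∧ π r = π s ∧
        ∀ i j : ℕ, r ≤ i → i < j → j < s → π i ≠ π j) ∧
      ((∀ j : ℕ, 0 ≤ (c₀ : ℤ) + ∑ i ∈ Finset.range j, w (π i, π (i + 1))) →
        ∃ r s : ℕ, r < s ∧ π r = π s ∧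
          0 ≤ ∑ i ∈ Finset.Ico r s, w (π i, π (i + 1))) := by
  classical
  constructor
  · -- simple cycle
    have hrep : ∃ s : ℕ, ∃ r, r < s ∧ π r = π s := by
      obtain ⟨a, b, hab, heq⟩ := Finite.exists_ne_map_eq_of_infinite π
      rcases lt_or_gt_of_ne hab with h | h
      · exact ⟨b, a, h, heq⟩
      · exact ⟨a, b, h, heq.symm⟩
    obtain ⟨r, hrs, heq⟩ := Nat.find_spec hrep
    refine ⟨r, Nat.find hrep, hrs, heq, ?_⟩
    intro i j hri hij hjs hij'
    exact absurd (Nat.find_le ⟨i, hij, hij'⟩) (not_le_of_gt hjs)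
  · intro hsum
    by_contra hcon
    push_neg at hcon
    have hneg : ∀ r s : ℕ, r < s → π r = π s →
        ∑ i ∈ Finset.Ico r s, w (π i, π (i + 1)) ≤ -1 := by
      intro r s h1 h2
      have := hcon r s h1 h2
      omega
    -- some vertex occurs infinitely often
    obtain ⟨v, hv⟩ := Finite.exists_infinite_fiber π
    have hinf : (setOf fun n => π n = v).Infinite := by
      rw [← Set.infinite_coe_iff]; exact hv
    set p : ℕ → Prop := fun n => π n = v with hp
    set S : ℕ → ℤ := fun j => ∑ i ∈ Finset.range j, w (π i, π (i + 1)) with hS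
    have hmono : ∀ k, Nat.nth p k < Nat.nth p (k + 1) :=
      fun k => (Nat.nth_lt_nth hinf).mpr k.lt_succ_self
    have hmem : ∀ k, π (Nat.nth p k) = v := fun k => Nat.nth_mem_of_infinite hinf k
    have key : ∀ k : ℕ, S (Nat.nth p k) ≤ S (Nat.nth p 0) - k := by
      intro k
      induction k with
      | zero => simp
      | succ k ih =>
        have h1 := hmono k
        have h2 : S (Nat.nth p k) + ∑ i ∈ Finset.Ico (Nat.nth p k) (Nat.nth p (k+1)),
            w (π i, π (i + 1)) = S (Nat.nth p (k + 1)) :=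
          Finset.sum_range_add_sum_Ico _ h1.le
        have h3 := hneg _ _ h1 ((hmem k).trans (hmem (k+1)).symm)
        push_cast
        omega
    set k := (c₀ + S (Nat.nth p 0)).toNat + 1 with hk
    have hk1 : (c₀ : ℤ) + S (Nat.nth p 0) ≤ (c₀ + S (Nat.nth p 0)).toNat :=
      Int.self_le_toNat _
    have h4 := key k
    have h5 : (0:ℤ) ≤ (c₀ : ℤ) + S (Nat.nth p k) := hsum (Nat.nth p k)
    have : (k : ℤ) = ((c₀ + S (Nat.nth p 0)).toNat : ℤ) + 1 := by push_cast [hk]; ring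
    omega
end
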